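/- Let q be a complex number with 0 < |q| < 1. Then ∑_{n=0}^∞ (q;q²)_n (−1)^n q^{n²+n} / (−q;q)_{2n+1} = ∑_{n=0}^∞ (−1)^n q^{n(n+1)/2}. -/

import Mathlib

open Finset

/-- The finite q-shifted factorial `(a;q)_n`. -/
noncomputable def qPoch (a q : ℂ) (n : ℕ) : ℂ := ∏ j ∈ Finset.range n, (1 - a * q ^ j)

/-- The infinite q-shifted factorial `(a;q)_∞`. -/
noncomputable def qPochInf (a q : ℂ) : ℂ := ∏' j : ℕ, (1 - a * q ^ j)

open Filter Topology

/-!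
Put `u k = ∑ₙ (q;q²)ₙ (-1)ⁿ q^(n²+(2k+1)n) / (-q^(k+1);q)_{2n+1}`, so that the left-hand side
is `u 0`. Termwise, the `n`-th summands of `u k` and `q^(k+1) u (k+1)` add up to `Eₙ - Eₙ₊₁`, where
`Eₙ = (q;q²)ₙ (-1)ⁿ q^(n²+(2k+1)n) / (-q^(k+1);q)_{2n}` satisfies `E₀ = 1` and `Eₙ → 0`; hence
`u k = 1 - q^(k+1) u (k+1)`. Since the `u k` are bounded uniformly in `k`, iterating this
recursion yields the false theta series `∑ₙ (-1)ⁿ q^(n(n+1)/2)`.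
-/

lemma Nat.succ_mul_succ_add_one_div_two (n : ℕ) :
    (n + 1) * (n + 1 + 1) / 2 = n * (n + 1) / 2 + (n + 1) := by
  rw [show (n + 1) * (n + 1 + 1) = n * (n + 1) + (n + 1) * 2 by ring,
    Nat.add_mul_div_right _ _ two_pos]

lemma Nat.le_mul_succ_div_two (n : ℕ) : n ≤ n * (n + 1) / 2 := by
  induction n with
  | zero => rfl
  | succ n ih => rw [Nat.succ_mul_succ_add_one_div_two]; omega

theorem eq_tsum_of_eq_one_sub_pow_mul {𝕜 : Type*} [NormedField 𝕜] [CompleteSpace 𝕜] {q : 𝕜}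
    (hq : ‖q‖ < 1) {u : ℕ → 𝕜} {C : ℝ} (hC : ∀ k, ‖u k‖ ≤ C)
    (hu : ∀ k, u k = 1 - q ^ (k + 1) * u (k + 1)) :
    u 0 = ∑' n : ℕ, (-1) ^ n * q ^ (n * (n + 1) / 2) := by
  have hiter (N : ℕ) : u 0 = ∑ n ∈ range N, (-1) ^ n * q ^ (n * (n + 1) / 2)
      + (-1) ^ N * q ^ (N * (N + 1) / 2) * u N := by
    induction N with
    | zero => simp
    | succ N ih =>
      rw [ih, hu N, sum_range_succ, Nat.succ_mul_succ_add_one_div_two, pow_add, pow_succ (-1 : 𝕜)]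
      ring
  have hnorm (n : ℕ) : ‖(-1 : 𝕜) ^ n * q ^ (n * (n + 1) / 2)‖ ≤ ‖q‖ ^ n := by
    rw [norm_mul, norm_pow, norm_neg, norm_one, one_pow, one_mul, norm_pow]
    exact pow_le_pow_of_le_one (norm_nonneg q) hq.le (Nat.le_mul_succ_div_two n)
  have hsum : Summable fun n : ℕ ↦ ‖(-1 : 𝕜) ^ n * q ^ (n * (n + 1) / 2)‖ :=
    .of_nonneg_of_le (fun _ ↦ norm_nonneg _) hnorm (summable_geometric_of_lt_one (norm_nonneg q) hq)
  have hrem : Tendsto (fun N : ℕ ↦ (-1) ^ N * q ^ (N * (N + 1) / 2) * u N) atTop (𝓝 0) := by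
    refine squeeze_zero_norm (fun N ↦ ?_) (by
      simpa using (tendsto_pow_atTop_nhds_zero_of_lt_one (norm_nonneg q) hq).mul_const C)
    rw [norm_mul]
    exact mul_le_mul (hnorm N) (hC N) (norm_nonneg _) (by positivity)
  refine ((hasSum_iff_tendsto_nat_of_summable_norm hsum).2 ?_).tsum_eq.symm
  simpa [sub_eq_of_eq_add (hiter _)] using tendsto_const_nhds (x := u 0) |>.sub hrem

lemma summable_pow_mul_pow_sq {r : ℝ} (hr₀ : 0 ≤ r) (hr₁ : r < 1) (K : ℝ) :
    Summable fun n : ℕ ↦ K ^ n * r ^ (n ^ 2) := by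
  have hsmall : ∀ᶠ n : ℕ in atTop, |K| * r ^ n ≤ 1 / 2 :=
    ((tendsto_pow_atTop_nhds_zero_of_lt_one hr₀ hr₁).const_mul |K|).eventually
      (ge_mem_nhds (by norm_num))
  refine .of_norm_bounded_eventually_nat summable_geometric_two (hsmall.mono fun n hn ↦ ?_)
  calc ‖K ^ n * r ^ (n ^ 2)‖ = (|K| * r ^ n) ^ n := by
        rw [Real.norm_eq_abs, abs_mul, abs_pow, abs_pow, abs_of_nonneg hr₀, mul_pow, sq, pow_mul]
    _ ≤ (1 / 2) ^ n := pow_le_pow_left₀ (by positivity) hn n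

section QPochhammer

variable {a q : ℂ}

lemma qPoch_succ (n : ℕ) : qPoch a q (n + 1) = qPoch a q n * (1 - a * q ^ n) :=
  prod_range_succ _ _

lemma qPoch_succ' (n : ℕ) : qPoch a q (n + 1) = (1 - a) * qPoch (a * q) q n := by
  simp only [qPoch, prod_range_succ', pow_succ', pow_zero, mul_one, mul_assoc, mul_comm (1 - a)]

lemma one_sub_norm_le_norm_one_sub_mul_pow (hq : ‖q‖ ≤ 1) (j : ℕ) :
    1 - ‖a‖ ≤ ‖1 - a * q ^ j‖ :=
  calc 1 - ‖a‖ ≤ 1 - ‖a * q ^ j‖ := by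
        rw [norm_mul, norm_pow]
        gcongr
        exact mul_le_of_le_one_right (norm_nonneg a) (pow_le_one₀ (norm_nonneg q) hq)
    _ ≤ ‖1 - a * q ^ j‖ := by simpa using norm_sub_norm_le (1 : ℂ) (a * q ^ j)

lemma norm_qPoch_le (hq : ‖q‖ ≤ 1) (n : ℕ) : ‖qPoch a q n‖ ≤ (1 + ‖a‖) ^ n := by
  calc ‖qPoch a q n‖ = ∏ j ∈ range n, ‖1 - a * q ^ j‖ := norm_prod _ _
    _ ≤ ∏ _j ∈ range n, (1 + ‖a‖) := by
      refine prod_le_prod (fun _ _ ↦ norm_nonneg _) fun j _ ↦ (norm_sub_le _ _).trans ?_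
      rw [norm_one, norm_mul, norm_pow]
      gcongr
      exact mul_le_of_le_one_right (norm_nonneg a) (pow_le_one₀ (norm_nonneg q) hq)
    _ = (1 + ‖a‖) ^ n := by rw [prod_const, card_range]

lemma one_sub_norm_pow_le_norm_qPoch (ha : ‖a‖ ≤ 1) (hq : ‖q‖ ≤ 1) (n : ℕ) :
    (1 - ‖a‖) ^ n ≤ ‖qPoch a q n‖ := by
  calc (1 - ‖a‖) ^ n = ∏ _j ∈ range n, (1 - ‖a‖) := by rw [prod_const, card_range]
    _ ≤ ∏ j ∈ range n, ‖1 - a * q ^ j‖ :=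
      prod_le_prod (fun _ _ ↦ sub_nonneg.2 ha) fun j _ ↦ one_sub_norm_le_norm_one_sub_mul_pow hq j
    _ = ‖qPoch a q n‖ := (norm_prod _ _).symm

lemma qPoch_ne_zero (ha : ‖a‖ < 1) (hq : ‖q‖ ≤ 1) (n : ℕ) : qPoch a q n ≠ 0 :=
  norm_pos_iff.1 <| (pow_pos (sub_pos.2 ha) n).trans_le
    (one_sub_norm_pow_le_norm_qPoch ha.le hq n)

end QPochhammer

section FalseTheta

variable {q : ℂ}

noncomputable def falseThetaTerm (q : ℂ) (k n : ℕ) : ℂ :=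
  qPoch q (q ^ 2) n * (-1) ^ n * q ^ (n ^ 2 + (2 * k + 1) * n) / qPoch (-q ^ (k + 1)) q (2 * n + 1)

noncomputable def falseThetaRemainder (q : ℂ) (k n : ℕ) : ℂ :=
  qPoch q (q ^ 2) n * (-1) ^ n * q ^ (n ^ 2 + (2 * k + 1) * n) / qPoch (-q ^ (k + 1)) q (2 * n)

lemma falseThetaRemainder_zero (k : ℕ) : falseThetaRemainder q k 0 = 1 := by
  simp [falseThetaRemainder, qPoch]

theorem falseThetaTerm_add_pow_mul_falseThetaTerm_succ (hq : ‖q‖ < 1) (k n : ℕ) :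
    falseThetaTerm q k n + q ^ (k + 1) * falseThetaTerm q (k + 1) n =
      falseThetaRemainder q k n - falseThetaRemainder q k (n + 1) := by
  have hD (m : ℕ) : qPoch (-q ^ (k + 1)) q m ≠ 0 :=
    qPoch_ne_zero (by simpa using pow_lt_one₀ (norm_nonneg q) hq k.succ_ne_zero) hq.le m
  have hD₁ : qPoch (-q ^ (k + 1)) q (2 * n + 1) =
      qPoch (-q ^ (k + 1)) q (2 * n) * (1 + q ^ (k + 1) * q ^ (2 * n)) := by
    rw [qPoch_succ]; ring
  have hD₂ : qPoch (-q ^ (k + 1)) q (2 * (n + 1)) =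
      qPoch (-q ^ (k + 1)) q (2 * n + 1) * (1 + q * q ^ (k + 1) * q ^ (2 * n)) := by
    rw [mul_add_one, qPoch_succ]; ring
  have hD' : qPoch (-q ^ (k + 1)) q (2 * (n + 1)) =
      (1 + q ^ (k + 1)) * qPoch (-q ^ (k + 1 + 1)) q (2 * n + 1) := by
    rw [mul_add_one, qPoch_succ', neg_mul, ← pow_succ, sub_neg_eq_add]
  have hN : qPoch q (q ^ 2) (n + 1) = qPoch q (q ^ 2) n * (1 - q * q ^ (2 * n)) := by
    rw [qPoch_succ, pow_mul]
  have h₁ : 1 + q ^ (k + 1) * q ^ (2 * n) ≠ 0 := right_ne_zero_of_mul (hD₁ ▸ hD _)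
  have h₂ : 1 + q * q ^ (k + 1) * q ^ (2 * n) ≠ 0 := right_ne_zero_of_mul (hD₂ ▸ hD _)
  have h₃ : 1 + q ^ (k + 1) ≠ 0 := left_ne_zero_of_mul (hD' ▸ hD _)
  have hD'' : qPoch (-q ^ (k + 1 + 1)) q (2 * n + 1) =
      qPoch (-q ^ (k + 1)) q (2 * (n + 1)) / (1 + q ^ (k + 1)) := by
    rw [hD', mul_div_cancel_left₀ _ h₃]
  have hQ₁ : q ^ (n ^ 2 + (2 * (k + 1) + 1) * n) = q ^ (n ^ 2 + (2 * k + 1) * n) * q ^ (2 * n) := by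
    rw [← pow_add]; ring_nf
  have hQ₂ : q ^ ((n + 1) ^ 2 + (2 * k + 1) * (n + 1)) =
      q ^ (n ^ 2 + (2 * k + 1) * n) * q ^ (2 * n) * q ^ (k + 1) * q ^ (k + 1) := by
    simp only [← pow_add]; ring_nf
  have hD₀ := hD (2 * n)
  simp only [falseThetaTerm, falseThetaRemainder, hD'', hD₂, hD₁, hN, hQ₁, hQ₂, pow_succ (-1 : ℂ)]
  generalize q ^ (k + 1) = a at *
  generalize q ^ (2 * n) = x at *
  generalize qPoch (-a) q (2 * n) = D at *
  field_simp
  ring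

lemma norm_mul_pow_div_qPoch_le (hq : ‖q‖ < 1) (k n m : ℕ) (hm : m ≤ 2 * n + 1) :
    ‖qPoch q (q ^ 2) n * (-1) ^ n * q ^ (n ^ 2 + (2 * k + 1) * n) / qPoch (-q ^ (k + 1)) q m‖ ≤
      2 ^ n * ‖q‖ ^ (n ^ 2) / (1 - ‖q‖) ^ (2 * n + 1) := by
  have hr : 0 < 1 - ‖q‖ := sub_pos.2 hq
  have hqk : ‖-q ^ (k + 1)‖ ≤ ‖q‖ := by
    rw [norm_neg, norm_pow]
    exact pow_le_of_le_one (norm_nonneg q) hq.le k.succ_ne_zero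
  have hnum : ‖qPoch q (q ^ 2) n‖ ≤ 2 ^ n := by
    refine (norm_qPoch_le (by rw [norm_pow]; exact pow_le_one₀ (norm_nonneg q) hq.le) n).trans ?_
    exact pow_le_pow_left₀ (by positivity) (by linarith) n
  have hpow : ‖q ^ (n ^ 2 + (2 * k + 1) * n)‖ ≤ ‖q‖ ^ (n ^ 2) := by
    rw [norm_pow]
    exact pow_le_pow_of_le_one (norm_nonneg q) hq.le (Nat.le_add_right _ _)
  have hden : (1 - ‖q‖) ^ (2 * n + 1) ≤ ‖qPoch (-q ^ (k + 1)) q m‖ :=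
    calc (1 - ‖q‖) ^ (2 * n + 1) ≤ (1 - ‖q‖) ^ m :=
          pow_le_pow_of_le_one hr.le (by linarith [norm_nonneg q]) hm
      _ ≤ (1 - ‖-q ^ (k + 1)‖) ^ m := by gcongr
      _ ≤ ‖qPoch (-q ^ (k + 1)) q m‖ :=
          one_sub_norm_pow_le_norm_qPoch (hqk.trans hq.le) hq.le m
  rw [norm_div, norm_mul, norm_mul, norm_pow, norm_neg, norm_one, one_pow, mul_one]
  exact div_le_div₀ (by positivity) (mul_le_mul hnum hpow (norm_nonneg _) (by positivity))
    (pow_pos hr _) hden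

lemma norm_falseThetaTerm_le (hq : ‖q‖ < 1) (k n : ℕ) :
    ‖falseThetaTerm q k n‖ ≤ 2 ^ n * ‖q‖ ^ (n ^ 2) / (1 - ‖q‖) ^ (2 * n + 1) :=
  norm_mul_pow_div_qPoch_le hq k n _ le_rfl

lemma norm_falseThetaRemainder_le (hq : ‖q‖ < 1) (k n : ℕ) :
    ‖falseThetaRemainder q k n‖ ≤ 2 ^ n * ‖q‖ ^ (n ^ 2) / (1 - ‖q‖) ^ (2 * n + 1) :=
  norm_mul_pow_div_qPoch_le hq k n _ (Nat.le_succ _)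

lemma summable_two_pow_mul_pow_sq_div {r : ℝ} (hr₀ : 0 ≤ r) (hr₁ : r < 1) :
    Summable fun n : ℕ ↦ 2 ^ n * r ^ (n ^ 2) / (1 - r) ^ (2 * n + 1) := by
  refine ((summable_pow_mul_pow_sq hr₀ hr₁ (2 / (1 - r) ^ 2)).div_const (1 - r)).congr fun n ↦ ?_
  generalize 1 - r = c
  rw [div_pow, ← pow_mul]
  ring

lemma summable_falseThetaTerm (hq : ‖q‖ < 1) (k : ℕ) : Summable (falseThetaTerm q k) :=
  .of_norm_bounded (summable_two_pow_mul_pow_sq_div (norm_nonneg q) hq) (norm_falseThetaTerm_le hq k)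

lemma tendsto_falseThetaRemainder (hq : ‖q‖ < 1) (k : ℕ) :
    Tendsto (falseThetaRemainder q k) atTop (𝓝 0) :=
  squeeze_zero_norm (norm_falseThetaRemainder_le hq k)
    (summable_two_pow_mul_pow_sq_div (norm_nonneg q) hq).tendsto_atTop_zero

theorem tsum_falseThetaTerm_eq (hq : ‖q‖ < 1) (k : ℕ) :
    ∑' n, falseThetaTerm q k n = 1 - q ^ (k + 1) * ∑' n, falseThetaTerm q (k + 1) n := by
  have hsum := (summable_falseThetaTerm hq k).hasSum.add
    ((summable_falseThetaTerm hq (k + 1)).hasSum.mul_left (q ^ (k + 1)))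
  have hpartial : Tendsto (fun N ↦ ∑ n ∈ range N,
      (falseThetaTerm q k n + q ^ (k + 1) * falseThetaTerm q (k + 1) n)) atTop (𝓝 (1 - 0)) := by
    simp_rw [falseThetaTerm_add_pow_mul_falseThetaTerm_succ hq, sum_range_sub',
      falseThetaRemainder_zero]
    exact tendsto_const_nhds.sub (tendsto_falseThetaRemainder hq k)
  linear_combination tendsto_nhds_unique hsum.tendsto_sum_nat hpartial

end FalseTheta

theorem ramanujan_false_theta_general (q : ℂ) (hq1 : ‖q‖ < 1) :
    ∑' n : ℕ, qPoch q (q ^ 2) n * (-1) ^ n * q ^ (n ^ 2 + n) / qPoch (-q) q (2 * n + 1)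
    = ∑' n : ℕ, (-1) ^ n * q ^ (n * (n + 1) / 2) := by
  have hterm : (fun n : ℕ ↦ qPoch q (q ^ 2) n * (-1) ^ n * q ^ (n ^ 2 + n) /
      qPoch (-q) q (2 * n + 1)) = falseThetaTerm q 0 := by
    funext n
    simp [falseThetaTerm]
  rw [hterm]
  exact eq_tsum_of_eq_one_sub_pow_mul hq1
    (fun k ↦ tsum_of_norm_bounded (summable_two_pow_mul_pow_sq_div (norm_nonneg q) hq1).hasSum
      (norm_falseThetaTerm_le hq1 k))
    (tsum_falseThetaTerm_eq hq1)

/-- A false theta function identity of Ramanujan (Lost Notebook, p. 13). -/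
theorem ramanujan_false_theta (q : ℂ) (hq0 : 0 < ‖q‖) (hq1 : ‖q‖ < 1) :
    ∑' n : ℕ, qPoch q (q ^ 2) n * (-1) ^ n * q ^ (n ^ 2 + n) / qPoch (-q) q (2 * n + 1)
    = ∑' n : ℕ, (-1) ^ n * q ^ (n * (n + 1) / 2) :=
  ramanujan_false_theta_general q hq1
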